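/- Let 𝒜 = (Q, A, δ, λ) be a Mealy automaton that is weakly reset with respect to some nonempty ideal H ⊆ Syn(𝒜). Then the set I(𝒜) = Syn(𝒜) \ ⋃_{g ∈ S(𝒜)} g⁻¹(A* \ Syn(𝒜)) is a two-sided ideal of A*, it satisfies g(I(𝒜)) ⊆ I(𝒜) for every g ∈ S(𝒜), and it is the maximal such ideal contained in Syn(𝒜); in particular 𝒜 is weakly reset if and only if I(𝒜) ≠ ∅. -/
import Mathlib


/-- The action of a DFA transition function on words. -/
def dfaRun {Q A : Type*} (δ : Q → A → Q) (q : Q) (u : List A) : Q := u.foldl δ q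

/-- The sequential transformation of `A*` induced by a state of a Mealy automaton. -/
def mealyMap {Q A : Type*} (δ : Q → A → Q) (lam : Q → A → A) : Q → List A → List A
  | _, [] => []
  | q, a :: u => lam q a :: mealyMap δ lam (δ q a) u

/-- The set of synchronizing (reset) words of the underlying DFA. -/
def synSet {Q A : Type*} [Fintype Q] [DecidableEq Q] (δ : Q → A → Q) : Set (List A) :=
  {u | (Finset.univ.image fun q => dfaRun δ q u).card = 1}

/-- The semigroup `S(𝒜)` generated by the transformations `𝒜_q`, as a subsemigroup of
`Function.End (List A)` (composition). -/
def genSemigroup {Q A : Type*} (δ : Q → A → Q) (lam : Q → A → A) :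
    Subsemigroup (Function.End (List A)) :=
  Subsemigroup.closure (Set.range fun q => (mealyMap δ lam q : Function.End (List A)))

/-- `I(𝒜) = Syn(𝒜) \ ⋃_{g ∈ S(𝒜)} g⁻¹(A* \ Syn(𝒜))`. -/
def maxIdeal {Q A : Type*} [Fintype Q] [DecidableEq Q]
    (δ : Q → A → Q) (lam : Q → A → A) : Set (List A) :=
  {u ∈ synSet δ | ∀ g ∈ genSemigroup δ lam, g u ∈ synSet δ}


lemma dfaRun_append {Q A : Type*} (δ : Q → A → Q) (q : Q) (u v : List A) :
    dfaRun δ q (u ++ v) = dfaRun δ (dfaRun δ q u) v := by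
  simp [dfaRun]

lemma mealyMap_append {Q A : Type*} (δ : Q → A → Q) (lam : Q → A → A) :
    ∀ (v : List A) (q : Q) (x : List A),
      mealyMap δ lam q (v ++ x) = mealyMap δ lam q v ++ mealyMap δ lam (dfaRun δ q v) x := by
  intro v
  induction v with
  | nil => intro q x; simp [mealyMap, dfaRun]
  | cons a t ih => intro q x; simp [mealyMap, dfaRun, ih (δ q a) x]

lemma synSet_mem_iff {Q A : Type*} [Fintype Q] [DecidableEq Q] [Nonempty Q]
    (δ : Q → A → Q) (u : List A) :
    u ∈ synSet δ ↔ ∃ c, ∀ q, dfaRun δ q u = c := by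
  constructor
  · intro h
    obtain ⟨c, hc⟩ := Finset.card_eq_one.mp h
    exact ⟨c, fun q => by
      have : dfaRun δ q u ∈ Finset.univ.image fun q => dfaRun δ q u :=
        Finset.mem_image_of_mem _ (Finset.mem_univ q)
      rwa [hc, Finset.mem_singleton] at this⟩
  · rintro ⟨c, hc⟩
    have : (Finset.univ.image fun q => dfaRun δ q u) = {c} := by
      apply Finset.eq_singleton_iff_unique_mem.mpr
      constructor
      · obtain ⟨q⟩ := ‹Nonempty Q›
        exact hc q ▸ Finset.mem_image_of_mem _ (Finset.mem_univ q)
      · intro x hx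
        obtain ⟨q, _, hq⟩ := Finset.mem_image.mp hx
        rw [← hq, hc q]
    simp [synSet, this]

lemma synSet_ideal {Q A : Type*} [Fintype Q] [DecidableEq Q] [Nonempty Q]
    (δ : Q → A → Q) {u : List A} (hu : u ∈ synSet δ) (v w : List A) :
    v ++ u ++ w ∈ synSet δ := by
  obtain ⟨c, hc⟩ := (synSet_mem_iff δ u).mp hu
  exact (synSet_mem_iff δ _).mpr ⟨dfaRun δ c w, fun q => by
    rw [dfaRun_append, dfaRun_append, hc]⟩

lemma gen_split {Q A : Type*} (δ : Q → A → Q) (lam : Q → A → A) :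
    ∀ g ∈ genSemigroup δ lam, ∀ v x : List A,
      ∃ g' ∈ genSemigroup δ lam, g (v ++ x) = g v ++ g' x := by
  intro g hg
  induction hg using Subsemigroup.closure_induction with
  | mem f hf =>
    obtain ⟨q, rfl⟩ := hf
    intro v x
    refine ⟨mealyMap δ lam (dfaRun δ q v), Subsemigroup.subset_closure ⟨_, rfl⟩, ?_⟩
    exact mealyMap_append δ lam v q x
  | mul f h hf hh ihf ihh =>
    intro v x
    obtain ⟨h', hh', heq⟩ := ihh v x
    obtain ⟨f', hf', feq⟩ := ihf (h v) (h' x)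
    refine ⟨f' * h', mul_mem hf' hh', ?_⟩
    show f (h (v ++ x)) = f (h v) ++ f' (h' x)
    rw [heq]; exact feq

/-- For a weakly reset Mealy automaton, `I(𝒜)` is a two-sided ideal, stable under `S(𝒜)`,
maximal among ideals contained in `Syn(𝒜)` witnessing the weak reset property, and nonempty;
in particular `𝒜` is weakly reset iff `I(𝒜) ≠ ∅`. -/
theorem stmt9 {Q A : Type*} [Fintype Q] [DecidableEq Q] [Fintype A]
    (δ : Q → A → Q) (lam : Q → A → A)
    (hsync : (synSet δ).Nonempty)
    (H : Set (List A)) (hHne : H.Nonempty) (hHsub : H ⊆ synSet δ)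
    (hHideal : ∀ u ∈ H, ∀ v w : List A, v ++ u ++ w ∈ H)
    (hHstab : ∀ q : Q, ∀ u ∈ H, mealyMap δ lam q u ∈ H) :
    (∀ u ∈ maxIdeal δ lam, ∀ v w : List A, v ++ u ++ w ∈ maxIdeal δ lam) ∧
    (∀ g ∈ genSemigroup δ lam, ∀ u ∈ maxIdeal δ lam, g u ∈ maxIdeal δ lam) ∧
    (∀ J : Set (List A), J ⊆ synSet δ → (∀ u ∈ J, ∀ v w : List A, v ++ u ++ w ∈ J) →
      (∀ q : Q, ∀ u ∈ J, mealyMap δ lam q u ∈ J) → J ⊆ maxIdeal δ lam) ∧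
    (maxIdeal δ lam).Nonempty := by
  have hQ : Nonempty Q := by
    by_contra hQ
    obtain ⟨u, hu⟩ := hsync
    simp only [not_nonempty_iff] at hQ
    have : (Finset.univ.image fun q => dfaRun δ q u) = ∅ := by
      simp [Finset.univ_eq_empty]
    rw [synSet, Set.mem_setOf_eq, this] at hu
    simp at hu
  have hmax : ∀ J : Set (List A), J ⊆ synSet δ →
      (∀ u ∈ J, ∀ v w : List A, v ++ u ++ w ∈ J) →
      (∀ q : Q, ∀ u ∈ J, mealyMap δ lam q u ∈ J) → J ⊆ maxIdeal δ lam := by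
    intro J hJsub _ hJstab u hu
    refine ⟨hJsub hu, ?_⟩
    intro g hg
    have : ∀ g ∈ genSemigroup δ lam, ∀ u ∈ J, g u ∈ J := by
      intro g hg
      induction hg using Subsemigroup.closure_induction with
      | mem f hf =>
        obtain ⟨q, rfl⟩ := hf
        exact fun u hu => hJstab q u hu
      | mul f h _ _ ihf ihh =>
        intro u hu
        exact ihf _ (ihh u hu)
    exact hJsub (this g hg u hu)
  refine ⟨?_, ?_, hmax, ?_⟩
  · rintro u ⟨hu, hstab⟩ v w
    refine ⟨synSet_ideal δ hu v w, ?_⟩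
    intro g hg
    rw [List.append_assoc]
    obtain ⟨g1, hg1, heq⟩ := gen_split δ lam g hg v (u ++ w)
    obtain ⟨g2, hg2, heq2⟩ := gen_split δ lam g1 hg1 u w
    rw [heq, heq2, ← List.append_assoc]
    exact synSet_ideal δ (hstab g1 hg1) (g v) (g2 w)
  · rintro g hg u ⟨hu, hstab⟩
    refine ⟨hstab g hg, ?_⟩
    intro f hf
    exact hstab (f * g) (mul_mem hf hg)
  · obtain ⟨u, hu⟩ := hHne
    exact ⟨u, hmax H hHsub hHideal hHstab hu⟩
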